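/- In the NFA for the status field of a root-level QNode, the state R₂ is reachable from R₁ only via paths containing at least two 'begin acquisition' edges; i.e., every path from R₁ to R₂ uses ≥ 2 begin-acquisition edges (two rounds of acquisition are necessary). -/

import Mathlib

inductive S : Type
  | R1 | R2 | W1 | W2 | W3 | W4 | U1 | U2 | U3 | A1
deriving DecidableEq

/-- Edges of the root-level status NFA; the Boolean flag marks 'begin acquisition' edges. -/
inductive E : S → S → Bool → Prop
  | a1 : E .R1 .W1 true
  | a2 : E .R1 .W2 true
  | a3 : E .A1 .W1 true
  | a4 : E .U2 .W3 true
  | a5 : E .U3 .W4 true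
  | e1 : E .W2 .U1 false
  | e2 : E .U1 .R1 false
  | e3 : E .U1 .U3 false
  | e4 : E .U3 .R1 false
  | e5 : E .W4 .U3 false
  | e6 : E .W4 .R2 false
  | e7 : E .W1 .U1 false
  | e8 : E .W1 .A1 false
  | e9 : E .A1 .U2 false
  | e10 : E .U2 .R1 false
  | e11 : E .U2 .U3 false
  | e12 : E .W3 .U2 false
  | e13 : E .W3 .R2 false
  | e14 : E .R2 .U1 false
  | e15 : E .R2 .A1 false


/-- Paths counting the number of 'begin acquisition' edges traversed. -/
inductive NPath : S → S → ℕ → Prop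
  | refl (s : S) : NPath s s 0
  | step {a b c : S} {n : ℕ} {f : Bool} :
      E a b f → NPath b c n → NPath a c (n + cond f 1 0)

/-! Assign to each state the least number of acquisitions needed to reach `R₂` from it. This
potential drops along every edge by at most the number of acquisitions the edge begins, hence along
a path by at most the path's count; it is `2` at `R₁` and `0` at `R₂`. -/

def acquisitionsToR2 : S → ℕ
  | .R1 => 2 | .R2 => 0 | .W1 => 1 | .W2 => 1 | .W3 => 0 | .W4 => 0
  | .U1 => 1 | .U2 => 1 | .U3 => 1 | .A1 => 1

lemma acquisitionsToR2_le_of_edge {a b : S} {f : Bool} (e : E a b f) :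
    acquisitionsToR2 a ≤ acquisitionsToR2 b + cond f 1 0 := by
  cases e <;> decide

lemma acquisitionsToR2_le_of_path {s t : S} {n : ℕ} (p : NPath s t n) :
    acquisitionsToR2 s ≤ acquisitionsToR2 t + n := by
  induction p with
  | refl => simp
  | step e _ ih => have := acquisitionsToR2_le_of_edge e; omega

/-- Two rounds of acquisition are necessary to reach R₂: every path from R₁
to R₂ uses at least two 'begin acquisition' edges. -/
theorem root_status_R2_needs_two_acquisitions :
    ∀ n : ℕ, NPath S.R1 S.R2 n → 2 ≤ n := fun n p =>
  (acquisitionsToR2_le_of_path p).trans_eq (zero_add n)
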